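/- Let 0 < α < 1, let f_α be the one-sided stable density and f_α(x|t) = t^{-1/α} f_α(x t^{-1/α}) its conditional version at scale t > 0. Let γ > 0, β > αγ and θ > −αγ. Then the four-parameter measure dQ^γ_{α,β,θ}(t) = (1/Γ(γ + θ/α)) (I₊^{β−αγ} f_α(·|t))(1) t^{γ+θ/α−1} dt has total mass 1/Γ(β + θ); that is, ∫_0^∞ (I₊^{β−αγ} f_α(·|t))(1) t^{γ+θ/α−1} dt = Γ(γ + θ/α) / Γ(β + θ). -/

import Mathlib

open MeasureTheory Real

/-- Riemann–Liouville fractional integral of order `ν > 0`. -/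
noncomputable def RL (ν : ℝ) (f : ℝ → ℝ) (x : ℝ) : ℝ :=
  (1 / Real.Gamma ν) * ∫ u in (0:ℝ)..x, (x - u) ^ (ν - 1) * f u

/-- Conditional stable density at scale `t`: `f_α(x|t) = t^{-1/α} f_α(x t^{-1/α})`. -/
noncomputable def condStable (α : ℝ) (f : ℝ → ℝ) (t : ℝ) (x : ℝ) : ℝ :=
  t ^ (-(1/α)) * f (x * t ^ (-(1/α)))

/-- Three-parameter Mittag-Leffler (Prabhakar) function `E^γ_{α,β}(z)`. -/
noncomputable def prabhakar (α β γ : ℝ) (z : ℝ) : ℝ :=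
  (1 / Real.Gamma γ) *
    ∑' k : ℕ, Real.Gamma (γ + k) * z ^ k / ((k.factorial : ℝ) * Real.Gamma (α * k + β))

/-- One-parameter Mittag-Leffler function `E_α(z)`. -/
noncomputable def mittagLeffler (α : ℝ) (z : ℝ) : ℝ :=
  ∑' k : ℕ, z ^ k / Real.Gamma (α * k + 1)

/-!
With `q = γ + θ / α` and `ν = β - α γ`, write the fractional integral at `1` as
`∫₀¹ (1 - u) ^ (ν - 1) f_α(u|t) du` and exchange the order of integration (Tonelli). For fixed `u`,
the substitution `x = u t ^ (-1/α)` turns the `t`-integral into `u ^ (α q - 1)` times the negative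
moment `∫ x ^ (-α q) f_α(x) dx = Γ(q) / (α Γ(α q))`; that moment comes from writing `x ^ (-p)` as
a Gamma integral `Γ(p)⁻¹ ∫ s ^ (p - 1) e ^ (-s x) ds` and inserting the Laplace transform
`e ^ (-s ^ α)`. What remains is the Beta integral `B(α q, ν)`, and `α q + ν = β + θ`.
-/

open Set
open scoped ENNReal

section General

variable {X Y : Type*} [MeasurableSpace X] [MeasurableSpace Y] {μ : Measure X} {ν : Measure Y}

theorem lintegral_ofReal_eq_ofReal_integral_of_ne_zero {g : X → ℝ} (hg : 0 ≤ᵐ[μ] g)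
    (h : ∫ x, g x ∂μ ≠ 0) : ∫⁻ x, ENNReal.ofReal (g x) ∂μ = ENNReal.ofReal (∫ x, g x ∂μ) :=
  (ofReal_integral_eq_lintegral_ofReal (Integrable.of_integral_ne_zero h) hg).symm

theorem integral_integral_eq_of_lintegral_lintegral_eq [SFinite μ] [SFinite ν] {F : X → Y → ℝ}
    (hF : AEStronglyMeasurable (Function.uncurry F) (μ.prod ν))
    (hF₀ : 0 ≤ᵐ[μ.prod ν] Function.uncurry F) {c : ℝ} (hc : 0 ≤ c)
    (h : ∫⁻ x, ∫⁻ y, ENNReal.ofReal (F x y) ∂ν ∂μ = ENNReal.ofReal c) :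
    ∫ x, ∫ y, F x y ∂ν ∂μ = c := by
  have hprod : ∫⁻ z, ENNReal.ofReal (Function.uncurry F z) ∂μ.prod ν = ENNReal.ofReal c := by
    rw [lintegral_prod _ hF.aemeasurable.ennreal_ofReal]
    exact h
  have hint : Integrable (Function.uncurry F) (μ.prod ν) :=
    ⟨hF, (hasFiniteIntegral_iff_ofReal hF₀).2 (hprod ▸ ENNReal.ofReal_lt_top)⟩
  rw [integral_integral hint]
  exact (integral_eq_lintegral_of_nonneg_ae hF₀ hF).trans (by rw [hprod, ENNReal.toReal_ofReal hc])

end General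

theorem lintegral_comp_mul_rpow_Ioi (g : ℝ → ℝ≥0∞) {c p : ℝ} (hc : 0 < c) (hp : p ≠ 0) :
    ∫⁻ x in Ioi 0, ENNReal.ofReal (c * |p| * x ^ (p - 1)) * g (c * x ^ p) = ∫⁻ y in Ioi 0, g y := by
  have himage : (fun x : ℝ => c * x ^ p) '' Ioi 0 = Ioi 0 := by
    ext y
    refine ⟨fun ⟨x, hx, hxy⟩ => hxy ▸ mul_pos hc (rpow_pos_of_pos hx p), fun hy => ?_⟩
    refine ⟨(y / c) ^ p⁻¹, rpow_pos_of_pos (div_pos hy hc) _, ?_⟩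
    show c * ((y / c) ^ p⁻¹) ^ p = y
    rw [← rpow_mul (div_pos hy hc).le, inv_mul_cancel₀ hp, rpow_one, mul_div_cancel₀ _ hc.ne']
  have hderiv : ∀ x ∈ Ioi (0 : ℝ),
      HasDerivWithinAt (fun x : ℝ => c * x ^ p) (c * (p * x ^ (p - 1))) (Ioi 0) x :=
    fun x hx => ((hasDerivAt_rpow_const (Or.inl (ne_of_gt hx))).const_mul c).hasDerivWithinAt
  have hinj : InjOn (fun x : ℝ => c * x ^ p) (Ioi 0) := fun x hx y hy hxy =>
    rpow_left_injOn hp (mem_Ioi.1 hx).le (mem_Ioi.1 hy).le (mul_left_cancel₀ hc.ne' hxy)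
  conv_rhs =>
    rw [← himage, lintegral_image_eq_lintegral_abs_deriv_mul measurableSet_Ioi hderiv hinj]
  refine setLIntegral_congr_fun measurableSet_Ioi fun x (hx : (0 : ℝ) < x) => ?_
  rw [abs_mul, abs_mul, abs_of_pos hc, abs_of_nonneg (rpow_nonneg hx.le _), mul_assoc]

theorem lintegral_rpow_mul_exp_neg_mul_Ioi {a r : ℝ} (ha : 0 < a) (hr : 0 < r) :
    ∫⁻ t in Ioi 0, ENNReal.ofReal (t ^ (a - 1) * exp (-(r * t)))
      = ENNReal.ofReal ((1 / r) ^ a * Gamma a) := by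
  have h := integral_rpow_mul_exp_neg_mul_Ioi ha hr
  rw [lintegral_ofReal_eq_ofReal_integral_of_ne_zero _ (by rw [h]; positivity), h]
  exact ae_restrict_of_forall_mem measurableSet_Ioi fun t (ht : (0 : ℝ) < t) => by
    positivity

theorem lintegral_rpow_mul_exp_neg_rpow {p a : ℝ} (hp : 0 < p) (ha : 0 < a) :
    ∫⁻ x in Ioi 0, ENNReal.ofReal (x ^ (a - 1) * exp (-x ^ p))
      = ENNReal.ofReal (1 / p * Gamma (a / p)) := by
  have h := integral_rpow_mul_exp_neg_rpow hp (by linarith : -1 < a - 1)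
  rw [sub_add_cancel] at h
  rw [lintegral_ofReal_eq_ofReal_integral_of_ne_zero _ (by rw [h]; positivity), h]
  exact ae_restrict_of_forall_mem measurableSet_Ioi fun t (ht : (0 : ℝ) < t) => by
    positivity

theorem lintegral_rpow_mul_one_sub_rpow {a b : ℝ} (ha : 0 < a) (hb : 0 < b) :
    ∫⁻ u in Ioo 0 1, ENNReal.ofReal (u ^ (a - 1) * (1 - u) ^ (b - 1))
      = ENNReal.ofReal (Gamma a * Gamma b / Gamma (a + b)) := by
  have hB := ProbabilityTheory.beta_pos ha hb
  have h := ProbabilityTheory.lintegral_betaPDF_eq_one ha hb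
  simp_rw [ProbabilityTheory.lintegral_betaPDF, mul_assoc,
    ENNReal.ofReal_mul (one_div_pos.2 hB).le] at h
  rw [lintegral_const_mul' _ _ ENNReal.ofReal_ne_top, mul_comm] at h
  rw [ENNReal.eq_inv_of_mul_eq_one_left h, one_div, ENNReal.ofReal_inv_of_pos hB, inv_inv]
  rfl

theorem RL_one_eq (ν : ℝ) (g : ℝ → ℝ) :
    RL ν g 1 = 1 / Gamma ν * ∫ u in Ioo 0 1, (1 - u) ^ (ν - 1) * g u := by
  rw [RL, intervalIntegral.integral_of_le zero_le_one, integral_Ioc_eq_integral_Ioo]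

section StableDensity

variable {α : ℝ} {f : ℝ → ℝ}

theorem condStable_nonneg (hnn : ∀ x, 0 ≤ f x) {t : ℝ} (ht : 0 ≤ t) (x : ℝ) :
    0 ≤ condStable α f t x :=
  mul_nonneg (rpow_nonneg ht _) (hnn _)

theorem measurable_condStable (hmeas : Measurable f) :
    Measurable fun p : ℝ × ℝ => condStable α f p.1 p.2 := by
  unfold condStable
  fun_prop

theorem lintegral_exp_neg_mul_mul_eq (hnn : ∀ x, 0 ≤ f x)
    (hlap : ∀ s > (0:ℝ), (∫ x in Ioi (0:ℝ), exp (-(s * x)) * f x) = exp (-(s ^ α)))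
    {s : ℝ} (hs : 0 < s) :
    ∫⁻ x in Ioi 0, ENNReal.ofReal (exp (-(s * x)) * f x) = ENNReal.ofReal (exp (-(s ^ α))) := by
  rw [lintegral_ofReal_eq_ofReal_integral_of_ne_zero _ (by rw [hlap s hs]; positivity), hlap s hs]
  exact ae_of_all _ fun x => mul_nonneg (exp_nonneg _) (hnn x)

theorem lintegral_rpow_neg_mul_eq (hα : 0 < α) (hmeas : Measurable f) (hnn : ∀ x, 0 ≤ f x)
    (hlap : ∀ s > (0:ℝ), (∫ x in Ioi (0:ℝ), exp (-(s * x)) * f x) = exp (-(s ^ α)))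
    {p : ℝ} (hp : 0 < p) :
    ∫⁻ x in Ioi 0, ENNReal.ofReal (x ^ (-p) * f x)
      = ENNReal.ofReal (Gamma (p / α) / (α * Gamma p)) := by
  have hΓ : 0 < Gamma p := Gamma_pos_of_pos hp
  have hgamma : ∀ x ∈ Ioi (0 : ℝ), ENNReal.ofReal (Gamma p) * ENNReal.ofReal (x ^ (-p) * f x)
      = ∫⁻ s in Ioi 0, ENNReal.ofReal (s ^ (p - 1)) * ENNReal.ofReal (exp (-(s * x)) * f x) := by
    intro x (hx : 0 < x)
    have hfx := hnn x
    calc ENNReal.ofReal (Gamma p) * ENNReal.ofReal (x ^ (-p) * f x)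
        = ENNReal.ofReal ((1 / x) ^ p * Gamma p) * ENNReal.ofReal (f x) := by
          rw [← ENNReal.ofReal_mul hΓ.le, ← ENNReal.ofReal_mul (by positivity), one_div,
            inv_rpow hx.le, ← rpow_neg hx.le, mul_left_comm, mul_assoc]
      _ = ∫⁻ s in Ioi 0,
            ENNReal.ofReal (s ^ (p - 1) * exp (-(x * s))) * ENNReal.ofReal (f x) := by
          rw [lintegral_mul_const' _ _ ENNReal.ofReal_ne_top,
            lintegral_rpow_mul_exp_neg_mul_Ioi hp hx]
      _ = _ := setLIntegral_congr_fun measurableSet_Ioi fun s (hs : 0 < s) => by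
          rw [← ENNReal.ofReal_mul (by positivity), ← ENNReal.ofReal_mul (by positivity),
            mul_comm x s, mul_assoc]
  have hlaplace : ∀ s ∈ Ioi (0 : ℝ),
      ∫⁻ x in Ioi 0, ENNReal.ofReal (s ^ (p - 1)) * ENNReal.ofReal (exp (-(s * x)) * f x)
        = ENNReal.ofReal (s ^ (p - 1) * exp (-s ^ α)) := by
    intro s (hs : 0 < s)
    rw [lintegral_const_mul' _ _ ENNReal.ofReal_ne_top, lintegral_exp_neg_mul_mul_eq hnn hlap hs,
      ← ENNReal.ofReal_mul (by positivity)]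
  have key : ENNReal.ofReal (Gamma p) * ∫⁻ x in Ioi 0, ENNReal.ofReal (x ^ (-p) * f x)
      = ENNReal.ofReal (1 / α * Gamma (p / α)) := by
    rw [← lintegral_const_mul' _ _ ENNReal.ofReal_ne_top,
      setLIntegral_congr_fun measurableSet_Ioi hgamma, lintegral_lintegral_swap (by fun_prop),
      setLIntegral_congr_fun measurableSet_Ioi hlaplace, lintegral_rpow_mul_exp_neg_rpow hα hp]
  rw [← ENNReal.eq_div_iff (by simpa using hΓ) ENNReal.ofReal_ne_top] at key
  rw [key, ← ENNReal.ofReal_div_of_pos hΓ]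
  congr 1
  field_simp

theorem lintegral_condStable_mul_rpow (hα : 0 < α) (hmeas : Measurable f) (hnn : ∀ x, 0 ≤ f x)
    (hlap : ∀ s > (0:ℝ), (∫ x in Ioi (0:ℝ), exp (-(s * x)) * f x) = exp (-(s ^ α)))
    {q u : ℝ} (hq : 0 < q) (hu : 0 < u) :
    ∫⁻ t in Ioi 0, ENNReal.ofReal (condStable α f t u * t ^ (q - 1))
      = ENNReal.ofReal (u ^ (α * q - 1) * Gamma q / Gamma (α * q)) := by
  have hpoint : ∀ x ∈ Ioi (0 : ℝ),
      ENNReal.ofReal (u ^ α * |-α| * x ^ (-α - 1))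
          * ENNReal.ofReal (condStable α f (u ^ α * x ^ (-α)) u * (u ^ α * x ^ (-α)) ^ (q - 1))
        = ENNReal.ofReal (α * u ^ (α * q - 1)) * ENNReal.ofReal (x ^ (-(α * q)) * f x) := by
    intro x (hx : 0 < x)
    have hpow : ∀ r, (u ^ α * x ^ (-α)) ^ r = u ^ (α * r) * x ^ (-α * r) := fun r => by
      rw [mul_rpow (by positivity) (by positivity), ← rpow_mul hu.le, ← rpow_mul hx.le]
    have hu' : u ^ (α * q - 1) = u ^ α * u ^ (α * (q - 1)) / u := by
      rw [← rpow_add hu, ← rpow_sub_one hu.ne']; ring_nf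
    have hx' : x ^ (-(α * q)) = x ^ (-α - 1) * x * x ^ (-α * (q - 1)) := by
      rw [← rpow_add_one hx.ne', ← rpow_add hx]; ring_nf
    have hfx := hnn x
    have hscale : (u ^ α * x ^ (-α)) ^ (-(1 / α)) = x / u := by
      rw [hpow, show α * -(1 / α) = -1 by field_simp, show -α * -(1 / α) = 1 by field_simp,
        rpow_neg_one, rpow_one, inv_mul_eq_div]
    rw [condStable, hscale, hpow, mul_div_cancel₀ x hu.ne', abs_neg, abs_of_pos hα,
      ← ENNReal.ofReal_mul (by positivity), ← ENNReal.ofReal_mul (by positivity), hu', hx']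
    congr 1
    field_simp
  rw [← lintegral_comp_mul_rpow_Ioi _ (rpow_pos_of_pos hu α) (neg_ne_zero.2 hα.ne'),
    setLIntegral_congr_fun measurableSet_Ioi hpoint, lintegral_const_mul' _ _ ENNReal.ofReal_ne_top,
    lintegral_rpow_neg_mul_eq hα hmeas hnn hlap (mul_pos hα hq), mul_div_cancel_left₀ _ hα.ne',
    ← ENNReal.ofReal_mul (by positivity)]
  congr 1
  field_simp

theorem lintegral_lintegral_rpow_mul_condStable (hα : 0 < α) (hmeas : Measurable f)
    (hnn : ∀ x, 0 ≤ f x)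
    (hlap : ∀ s > (0:ℝ), (∫ x in Ioi (0:ℝ), exp (-(s * x)) * f x) = exp (-(s ^ α)))
    {ν q : ℝ} (hν : 0 < ν) (hq : 0 < q) :
    ∫⁻ t in Ioi 0, ∫⁻ u in Ioo 0 1,
        ENNReal.ofReal ((1 - u) ^ (ν - 1) * (condStable α f t u * t ^ (q - 1)))
      = ENNReal.ofReal (Gamma ν * Gamma q / Gamma (α * q + ν)) := by
  have hinner : ∀ u ∈ Ioo (0 : ℝ) 1,
      ∫⁻ t in Ioi 0, ENNReal.ofReal ((1 - u) ^ (ν - 1) * (condStable α f t u * t ^ (q - 1)))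
        = ENNReal.ofReal (u ^ (α * q - 1) * (1 - u) ^ (ν - 1))
          * ENNReal.ofReal (Gamma q / Gamma (α * q)) := by
    rintro u ⟨hu₀, hu₁⟩
    have h1u : 0 < 1 - u := by linarith
    simp_rw [ENNReal.ofReal_mul (rpow_nonneg h1u.le _)]
    rw [lintegral_const_mul' _ _ ENNReal.ofReal_ne_top,
      lintegral_condStable_mul_rpow hα hmeas hnn hlap hq hu₀, ← ENNReal.ofReal_mul (by positivity),
      ← ENNReal.ofReal_mul (by positivity)]
    congr 1
    ring
  have hmeasK := measurable_condStable (α := α) hmeas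
  rw [lintegral_lintegral_swap (by fun_prop), setLIntegral_congr_fun measurableSet_Ioo hinner,
    lintegral_mul_const' _ _ ENNReal.ofReal_ne_top,
    lintegral_rpow_mul_one_sub_rpow (mul_pos hα hq) hν, ← ENNReal.ofReal_mul (by positivity)]
  congr 1
  field_simp

theorem integral_integral_rpow_mul_condStable (hα : 0 < α) (hmeas : Measurable f)
    (hnn : ∀ x, 0 ≤ f x)
    (hlap : ∀ s > (0:ℝ), (∫ x in Ioi (0:ℝ), exp (-(s * x)) * f x) = exp (-(s ^ α)))
    {ν q : ℝ} (hν : 0 < ν) (hq : 0 < q) :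
    ∫ t in Ioi 0, ∫ u in Ioo 0 1, (1 - u) ^ (ν - 1) * (condStable α f t u * t ^ (q - 1))
      = Gamma ν * Gamma q / Gamma (α * q + ν) := by
  have hmeasK := measurable_condStable (α := α) hmeas
  refine integral_integral_eq_of_lintegral_lintegral_eq (by fun_prop) ?_ (by positivity)
    (lintegral_lintegral_rpow_mul_condStable hα hmeas hnn hlap hν hq)
  rw [Measure.prod_restrict]
  refine ae_restrict_of_forall_mem (measurableSet_Ioi.prod measurableSet_Ioo) ?_
  rintro ⟨t, u⟩ ⟨ht : 0 < t, hu₀, hu₁⟩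
  have := condStable_nonneg (α := α) hnn ht.le u
  have : 0 < 1 - u := by linarith
  simp only [Pi.zero_apply, Function.uncurry_apply_pair]
  positivity

end StableDensity

theorem stmt_10_general (α : ℝ) (hα0 : 0 < α)
    (f : ℝ → ℝ) (hmeas : Measurable f) (hnn : ∀ x, 0 ≤ f x)
    (hlap : ∀ s > (0:ℝ),
      (∫ x in Set.Ioi (0:ℝ), Real.exp (-(s * x)) * f x) = Real.exp (-(s ^ α)))
    (γ β θ : ℝ) (hβ : α * γ < β) (hθ : -(α * γ) < θ) :
    (∫ t in Set.Ioi (0:ℝ), RL (β - α * γ) (condStable α f t) 1 * t ^ (γ + θ / α - 1))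
      = Real.Gamma (γ + θ / α) / Real.Gamma (β + θ) := by
  set q := γ + θ / α
  set ν := β - α * γ
  have hαq : α * q = α * γ + θ := by simp only [q]; field_simp
  have hq : 0 < q := pos_of_mul_pos_right (hαq ▸ by linarith) hα0.le
  have hν : 0 < ν := sub_pos.2 hβ
  have hqν : α * q + ν = β + θ := by simp only [hαq, ν]; ring
  have hRL : ∀ t, RL ν (condStable α f t) 1 * t ^ (q - 1)
      = 1 / Gamma ν * ∫ u in Ioo 0 1, (1 - u) ^ (ν - 1) * (condStable α f t u * t ^ (q - 1)) := by
    intro t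
    rw [RL_one_eq, mul_assoc, ← integral_mul_const]
    simp_rw [mul_assoc]
  simp_rw [hRL]
  rw [integral_const_mul, integral_integral_rpow_mul_condStable hα0 hmeas hnn hlap hν hq, hqν]
  field_simp

theorem stmt_10 (α : ℝ) (hα0 : 0 < α) (hα1 : α < 1)
    (f : ℝ → ℝ) (hmeas : Measurable f) (hnn : ∀ x, 0 ≤ f x)
    (hint : Integrable f) (hsupp : ∀ x < (0:ℝ), f x = 0)
    (hlap : ∀ s > (0:ℝ),
      (∫ x in Set.Ioi (0:ℝ), Real.exp (-(s * x)) * f x) = Real.exp (-(s ^ α)))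
    (γ β θ : ℝ) (hγ : 0 < γ) (hβ : α * γ < β) (hθ : -(α * γ) < θ) :
    (∫ t in Set.Ioi (0:ℝ), RL (β - α * γ) (condStable α f t) 1 * t ^ (γ + θ / α - 1))
      = Real.Gamma (γ + θ / α) / Real.Gamma (β + θ) :=
  stmt_10_general α hα0 f hmeas hnn hlap γ β θ hβ hθ
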